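/- Let $\theta$ solve $\theta_t' = \theta_t(p - \frac{|X_t|\theta_t}{\sqrt{2\pi}})$ with $\theta_0 > 0$. Then for all $t>0$: $\frac{1}{t}\int_0^t |X_u|\theta_u\,du \le \sqrt{2\pi}\,p + \frac{1}{t}\int_0^t |X_u|\,du + \sqrt{2\pi}\,\frac{\log(1+\theta_0)}{t}$. -/

import Mathlib

open MeasureTheory Real

/-!
Since `d log(1 + θ) = θ' / (1 + θ)`, the ODE gives
`a θ + s · (log (1 + θ))' = (θ / (1 + θ)) (a + s p) ≤ a + s p`.
Integrating over `[0, t]` and discarding `s log (1 + θ t) ≥ 0` yields the bound.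
-/

lemma mul_add_mul_logDeriv_one_add_le {x θ p s : ℝ} (hx : 0 ≤ x) (hθ : 0 ≤ θ) (hp : 0 ≤ p)
    (hs : 0 < s) :
    x * θ + s * (θ * (p - x * θ / s) / (1 + θ)) ≤ x + s * p :=
  calc x * θ + s * (θ * (p - x * θ / s) / (1 + θ)) = θ / (1 + θ) * (x + s * p) := by
        field_simp
        ring
    _ ≤ x + s * p :=
        mul_le_of_le_one_left (by positivity) (div_le_one_of_le₀ (by linarith) (by positivity))

lemma integral_mul_le_of_logistic_hasDerivAt {a θ : ℝ → ℝ} {p s t : ℝ} (hp : 0 ≤ p) (hs : 0 < s)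
    (ha : Continuous a) (ha₀ : ∀ u, 0 ≤ a u) (hθ : ∀ u, 0 ≤ θ u)
    (hode : ∀ u, HasDerivAt θ (θ u * (p - a u * θ u / s)) u) (ht : 0 ≤ t) :
    ∫ u in (0:ℝ)..t, a u * θ u ≤ s * p * t + (∫ u in (0:ℝ)..t, a u) + s * log (1 + θ 0) := by
  set Φ : ℝ → ℝ := fun v => (∫ u in (0:ℝ)..v, a u) + s * p * v - s * log (1 + θ v)
  have hΦ : ∀ u, HasDerivAt Φ (a u + s * p - s * (θ u * (p - a u * θ u / s) / (1 + θ u))) u :=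
    fun u => by
      have hlog := ((hode u).const_add 1).log (by linarith [hθ u])
      simpa using (((ha.integral_hasStrictDerivAt 0 u).hasDerivAt.fun_add
        ((hasDerivAt_id u).const_mul (s * p))).fun_sub (hlog.const_mul s))
  have hθcont : Continuous θ := continuous_iff_continuousAt.2 fun u => (hode u).continuousAt
  calc ∫ u in (0:ℝ)..t, a u * θ u ≤ Φ t - Φ 0 :=
        intervalIntegral.integral_le_sub_of_hasDeriv_right_of_le ht
          (fun u _ => (hΦ u).continuousAt.continuousWithinAt)
          (fun u _ => (hΦ u).hasDerivWithinAt) (ha.mul hθcont).integrableOn_Icc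
          fun u _ => by
            linarith [mul_add_mul_logDeriv_one_add_le (ha₀ u) (hθ u) hp hs]
    _ ≤ s * p * t + (∫ u in (0:ℝ)..t, a u) + s * log (1 + θ 0) := by
        have : 0 ≤ s * log (1 + θ t) := mul_nonneg hs.le (log_nonneg (by linarith [hθ t]))
        simp only [Φ, intervalIntegral.integral_same]
        linarith

/-- For `θ` solving `θ' = θ (p - |X| θ / √(2π))` with `θ 0 > 0`:
`(1/t) ∫_0^t |X u| θ u du ≤ √(2π) p + (1/t) ∫_0^t |X u| du + √(2π) log(1+θ 0)/t`. -/
theorem stmt_12 (p : ℝ) (hp : 0 < p) (X θ : ℝ → ℝ)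
    (hX : Continuous X)
    (hθpos : ∀ t, 0 < θ t)
    (hode : ∀ t, HasDerivAt θ (θ t * (p - |X t| * θ t / Real.sqrt (2 * Real.pi))) t) :
    ∀ t, 0 < t →
      (1 / t) * ∫ u in (0:ℝ)..t, |X u| * θ u
        ≤ Real.sqrt (2 * Real.pi) * p + (1 / t) * (∫ u in (0:ℝ)..t, |X u|)
            + Real.sqrt (2 * Real.pi) * Real.log (1 + θ 0) / t := by
  intro t ht
  have hbound := integral_mul_le_of_logistic_hasDerivAt hp.le (by positivity) hX.abs
    (fun u => abs_nonneg (X u)) (fun u => (hθpos u).le) hode ht.le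
  calc (1 / t) * ∫ u in (0:ℝ)..t, |X u| * θ u
      ≤ (1 / t) * (√(2 * π) * p * t + (∫ u in (0:ℝ)..t, |X u|) + √(2 * π) * log (1 + θ 0)) :=
        mul_le_mul_of_nonneg_left hbound (by positivity)
    _ = _ := by
        field_simp
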